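/- Let A be an n × n {+1,-1}-matrix and m an integer with n ≥ m > 1. Let Y(m,A) denote the number of m × m submatrices of A with nonzero determinant (counted over all C(n,m)² choices of row and column index sets). Then 4^(m-1) · Y(m,A) ≤ n^m · C(n,m); equivalently Y(m,A) ≤ 4·(n/4)^m·C(n,m). -/

import Mathlib

/-!
Fix the rows of an `m × m` minor. By Cauchy–Binet, the squares of the `m × m` minors of the
corresponding `m × n` row block `B` sum to `det (B Bᵀ)`, and by AM-GM on the eigenvalues of the
positive semidefinite Gram matrix `B Bᵀ`, whose diagonal entries all equal `n`, this is at most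
`n ^ m`. On the other hand, subtracting one row of a `±1` matrix from the others makes them even,
so every nonzero `m × m` minor of `A` is a multiple of `2 ^ (m - 1)` and its square is at least
`4 ^ (m - 1)`. Hence each of the `C(n, m)` row sets carries at most `n ^ m / 4 ^ (m - 1)` nonzero
minors.
-/

open Matrix Finset Function

section CauchyBinet

variable {ι R : Type*} {m : ℕ}

theorem sort_strictMono_comp_perm [LinearOrder ι] {g : Fin m → ι} (hg : StrictMono g)
    (σ : Equiv.Perm (Fin m)) : Tuple.sort (g ∘ σ) = σ⁻¹ := by
  refine (Tuple.eq_sort_iff.2 ⟨?_, fun i j hij h => ?_⟩).symm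
  · simpa [comp_def] using hg.monotone
  · simp only [Function.comp_apply, Equiv.Perm.coe_inv, Equiv.apply_symm_apply] at h
    exact absurd (hg.injective h) hij.ne

variable (m ι) in
def strictMonoProdPermEquivInjective [LinearOrder ι] :
    {g : Fin m → ι // StrictMono g} × Equiv.Perm (Fin m) ≃ {p : Fin m → ι // Injective p} where
  toFun x := ⟨x.1.1 ∘ x.2, x.1.2.injective.comp x.2.injective⟩
  invFun p :=
    (⟨p.1 ∘ Tuple.sort p.1, (Tuple.monotone_sort p.1).strictMono_of_injective
        (p.2.comp (Tuple.sort p.1).injective)⟩, (Tuple.sort p.1)⁻¹)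
  left_inv := by
    rintro ⟨⟨g, hg⟩, σ⟩
    ext <;> simp [sort_strictMono_comp_perm hg σ]
  right_inv := by
    rintro ⟨p, hp⟩
    ext
    simp

variable [Fintype ι] [CommRing R]

theorem det_mul_eq_sum_det_submatrix_mul_prod (B : Matrix (Fin m) ι R) (C : Matrix ι (Fin m) R) :
    det (B * C) = ∑ p : Fin m → ι, det (B.submatrix id p) * ∏ i, C (p i) i := by
  simp only [det_apply', mul_apply, prod_univ_sum, Fintype.piFinset_univ, mul_sum, sum_mul,
    submatrix_apply, id, prod_mul_distrib, mul_assoc]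
  exact sum_comm

theorem det_mul_eq_sum_strictMono [LinearOrder ι] (B : Matrix (Fin m) ι R)
    (C : Matrix ι (Fin m) R) :
    det (B * C) = ∑ g : {g : Fin m → ι // StrictMono g},
      det (B.submatrix id g) * det (C.submatrix g id) := by
  set F : (Fin m → ι) → R := fun p => det (B.submatrix id p) * ∏ i, C (p i) i
  have hF : ∀ p, F p ≠ 0 → Injective p := by
    intro p hp
    by_contra hninj
    obtain ⟨i, j, hij, hne⟩ := not_injective_iff.mp hninj
    exact hp (by simp only [F]; rw [det_zero_of_column_eq hne (fun k => by simp [hij]), zero_mul])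
  calc det (B * C) = ∑ p : {p : Fin m → ι // Injective p}, F p := by
        rw [det_mul_eq_sum_det_submatrix_mul_prod, ← sum_filter_of_ne (fun p _ => hF p),
          sum_subtype _ (fun p => mem_filter_univ p)]
    _ = ∑ x : {g : Fin m → ι // StrictMono g} × Equiv.Perm (Fin m), F (x.1.1 ∘ x.2) :=
        ((strictMonoProdPermEquivInjective ι m).sum_comp (fun p => F p)).symm
    _ = _ := by
      rw [Fintype.sum_prod_type]
      refine sum_congr rfl fun g _ => ?_
      rw [det_apply' (C.submatrix g.1 id), mul_sum]
      refine sum_congr rfl fun σ _ => ?_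
      have : B.submatrix id (g.1 ∘ σ) = (B.submatrix id g.1).submatrix id σ := rfl
      simp only [F, this, det_permute', submatrix_apply, id, Function.comp_apply]
      ring

end CauchyBinet

theorem two_pow_card_sub_one_dvd_det_of_odd {ι : Type*} [Fintype ι] [DecidableEq ι]
    (M : Matrix ι ι ℤ) (hM : ∀ i j, Odd (M i j)) : 2 ^ (Fintype.card ι - 1) ∣ M.det := by
  rcases isEmpty_or_nonempty ι with hι | ⟨⟨k⟩⟩
  · simp
  choose E hE using hM
  set d : ι → ℤ := fun i => if i = k then 1 else 2
  set N : Matrix ι ι ℤ := of fun i j => if i = k then M k j else E i j - E k j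
  -- subtracting row `k` from every other row leaves only even entries there
  have hdet : M.det = (diagonal d * N).det := by
    refine det_eq_of_forall_row_eq_smul_add_const (fun i => if i = k then 0 else 1) k
      (by simp) fun i j => ?_
    by_cases hi : i = k <;> simp [d, N, hi, hE]
    ring
  have hd : ∏ i, d i = 2 ^ (Fintype.card ι - 1) := by
    simp [d, prod_ite, filter_ne', card_erase_of_mem]
  rw [hdet, det_mul, det_diagonal, hd]
  exact dvd_mul_right _ _

theorem four_pow_card_sub_one_le_det_sq_of_odd {ι : Type*} [Fintype ι] [DecidableEq ι]
    (M : Matrix ι ι ℤ) (hM : ∀ i j, Odd (M i j)) (hdet : M.det ≠ 0) :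
    4 ^ (Fintype.card ι - 1) ≤ M.det ^ 2 := by
  have h := Int.le_of_dvd (abs_pos.mpr hdet)
    ((dvd_abs _ _).mpr (two_pow_card_sub_one_dvd_det_of_odd M hM))
  rw [← sq_abs, show (4 : ℤ) = 2 ^ 2 by norm_num, ← pow_mul, mul_comm, pow_mul]
  gcongr

theorem Matrix.PosSemidef.det_le_trace_div_card_pow {ι : Type*} [Fintype ι] [DecidableEq ι]
    {A : Matrix ι ι ℝ} (hA : A.PosSemidef) :
    A.det ≤ (A.trace / Fintype.card ι) ^ Fintype.card ι := by
  rcases isEmpty_or_nonempty ι with hι | hι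
  · simp
  set k := Fintype.card ι
  have hk : (k : ℝ) ≠ 0 := by positivity
  set ev := hA.isHermitian.eigenvalues
  have hev : ∀ i, 0 ≤ ev i := hA.eigenvalues_nonneg
  have amgm := Real.geom_mean_le_arith_mean_weighted univ (fun _ => (k : ℝ)⁻¹) ev
    (fun _ _ => by positivity) (by simp [k, hk]) (fun i _ => hev i)
  rw [← mul_sum, inv_mul_eq_div, Real.finsetProd_rpow _ _ fun i _ => hev i] at amgm
  have hprod : 0 ≤ ∏ i, ev i := prod_nonneg fun i _ => hev i
  have hdet : A.det = ∏ i, ev i := by simpa using hA.isHermitian.det_eq_prod_eigenvalues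
  have htrace : A.trace = ∑ i, ev i := by simpa using hA.isHermitian.trace_eq_sum_eigenvalues
  calc A.det = ((∏ i, ev i) ^ (k⁻¹ : ℝ)) ^ k := by
        rw [hdet, Real.rpow_inv_natCast_pow hprod (by positivity)]
    _ ≤ (A.trace / k) ^ k := by
        rw [htrace]
        exact pow_le_pow_left₀ (by positivity) amgm k

theorem det_mul_transpose_le_card_pow {ι κ : Type*} [Fintype ι] [DecidableEq ι] [Fintype κ]
    (B : Matrix ι κ ℤ) (hB : ∀ i j, B i j = 1 ∨ B i j = -1) :
    (B * Bᵀ).det ≤ Fintype.card κ ^ Fintype.card ι := by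
  rcases isEmpty_or_nonempty ι with hι | hι
  · simp
  have hsq : ∀ i j, B i j * B i j = 1 := fun i j => by rcases hB i j with h | h <;> simp [h]
  set Br := B.map (Int.cast : ℤ → ℝ)
  have hcast : ((B * Bᵀ).det : ℝ) = (Br * Brᵀ).det := by
    rw [Int.cast_det]
    congr 1
    ext i j
    simp [Br, mul_apply]
  have htrace : (Br * Brᵀ).trace = Fintype.card ι * Fintype.card κ := by
    simp [trace, mul_apply, Br, ← Int.cast_mul, hsq]
  have hgram := (posSemidef_self_mul_conjTranspose Br).det_le_trace_div_card_pow
  rw [conjTranspose_eq_transpose_of_trivial, htrace, mul_div_cancel_left₀ _ (by positivity),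
    ← hcast] at hgram
  exact_mod_cast hgram

theorem sum_det_submatrix_sq_eq_det_mul_transpose {m : ℕ} {ι : Type*} [Fintype ι] [LinearOrder ι]
    (B : Matrix (Fin m) ι ℤ) :
    ∑ g : {g : Fin m → ι // StrictMono g}, (B.submatrix id g).det ^ 2 = (B * Bᵀ).det := by
  rw [det_mul_eq_sum_strictMono]
  refine sum_congr rfl fun g _ => ?_
  rw [sq, ← det_transpose (B.submatrix id g)]
  rfl

theorem four_pow_mul_card_nonzero_minors_le {m : ℕ} {ι : Type*} [Fintype ι] [LinearOrder ι]
    (B : Matrix (Fin m) ι ℤ) (hB : ∀ i j, B i j = 1 ∨ B i j = -1) :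
    4 ^ (m - 1) * #{g : {g : Fin m → ι // StrictMono g} | (B.submatrix id g).det ≠ 0}
      ≤ Fintype.card ι ^ m := by
  have hodd : ∀ i j, Odd (B i j) := fun i j => by rcases hB i j with h | h <;> simp [h]
  zify
  calc (4 : ℤ) ^ (m - 1) * #{g : {g : Fin m → ι // StrictMono g} | (B.submatrix id g).det ≠ 0}
      ≤ ∑ g ∈ {g : {g : Fin m → ι // StrictMono g} | (B.submatrix id g).det ≠ 0},
          (B.submatrix id g).det ^ 2 := by
        rw [mul_comm, ← nsmul_eq_mul]
        refine card_nsmul_le_sum _ _ _ fun g hg => ?_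
        simpa only [Fintype.card_fin] using four_pow_card_sub_one_le_det_sq_of_odd
          (B.submatrix id g) (fun i j => hodd _ _) (mem_filter.mp hg).2
    _ ≤ ∑ g : {g : Fin m → ι // StrictMono g}, (B.submatrix id g).det ^ 2 :=
        sum_le_sum_of_subset_of_nonneg (filter_subset _ _) fun _ _ _ => sq_nonneg _
    _ = (B * Bᵀ).det := sum_det_submatrix_sq_eq_det_mul_transpose B
    _ ≤ Fintype.card ι ^ m := by simpa using det_mul_transpose_le_card_pow B hB

theorem card_subtype_strictMono {ι : Type*} [Fintype ι] [LinearOrder ι] (m : ℕ) :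
    Fintype.card {g : Fin m → ι // StrictMono g} = (Fintype.card ι).choose m := by
  let e : {g : Fin m → ι // StrictMono g} ≃ (Fin m ↪o ι) :=
    { toFun g := OrderEmbedding.ofStrictMono g.1 g.2
      invFun f := ⟨f, f.strictMono⟩
      left_inv _ := rfl
      right_inv _ := rfl }
  rw [← Nat.card_eq_fintype_card, ← Nat.card_eq_fintype_card (α := ι), ← Set.powersetCard.card]
  exact Nat.card_congr (e.trans Set.powersetCard.ofFinEmbEquiv)

theorem nonzero_minors_count_le_general (n m : ℕ)
    (A : Matrix (Fin n) (Fin n) ℤ) (hA : ∀ i j, A i j = 1 ∨ A i j = -1) :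
    4 ^ (m - 1) *
      (Finset.univ.filter
        (fun p : {f : Fin m → Fin n // StrictMono f} × {g : Fin m → Fin n // StrictMono g} =>
          (A.submatrix p.1.1 p.2.1).det ≠ 0)).card ≤ n ^ m * n.choose m := by
  calc _ = ∑ f : {f : Fin m → Fin n // StrictMono f}, 4 ^ (m - 1) *
          #{g : {g : Fin m → Fin n // StrictMono g} |
            ((A.submatrix f.1 id).submatrix id g).det ≠ 0} := by
        simp only [card_filter, Fintype.sum_prod_type, mul_sum]
        rfl
    _ ≤ ∑ _f : {f : Fin m → Fin n // StrictMono f}, Fintype.card (Fin n) ^ m := by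
        refine sum_le_sum fun f _ => ?_
        exact four_pow_mul_card_nonzero_minors_le (A.submatrix f.1 id) fun _ _ => hA _ _
    _ = n ^ m * n.choose m := by
        rw [sum_const, card_univ, card_subtype_strictMono, Fintype.card_fin, smul_eq_mul, mul_comm]

/-- For an `n × n` `{±1}`-matrix `A` and `n ≥ m > 1`, the number `Y(m,A)` of
`m × m` submatrices with nonzero determinant (over all pairs of strictly
monotone index maps `Fin m → Fin n`) satisfies `4^(m-1) * Y(m,A) ≤ n^m * C(n,m)`. -/
theorem nonzero_minors_count_le (n m : ℕ) (hm : 1 < m) (hmn : m ≤ n)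
    (A : Matrix (Fin n) (Fin n) ℤ) (hA : ∀ i j, A i j = 1 ∨ A i j = -1) :
    4 ^ (m - 1) *
      (Finset.univ.filter
        (fun p : {f : Fin m → Fin n // StrictMono f} × {g : Fin m → Fin n // StrictMono g} =>
          (A.submatrix p.1.1 p.2.1).det ≠ 0)).card ≤ n ^ m * n.choose m :=
  nonzero_minors_count_le_general n m A hA
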